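/- Let M ⊆ ℝ^k be a finitely generated additive submonoid (there is a finite subset of M every whose ℕ-linear combinations exhaust M). Suppose M = M_1 ∪ ⋯ ∪ M_p where each M_i ⊆ M is a finitely generated additive submonoid. Then the conic hull of M equals the union of the conic hulls of the M_i: cone(M) = cone(M_1) ∪ ⋯ ∪ cone(M_p). -/

import Mathlib

/-!
Identify `coneHull S` with the pointed cone `PointedCone.hull ℝ S`. The cone of a finitely
generated monoid is a finitely generated cone, and finitely generated cones are closed: by
Carathéodory's theorem for cones they are finite unions of images of the closed orthant under
injective linear maps. A point `x` with `n • x ∈ M` for some `n > 0` lies in `M i` up to the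
factor `n`, hence in the union of the cones of the `M i`. Such points are dense in the cone of `M`,
because their closure is closed under addition and under scaling by nonnegative rationals, hence
under scaling by all nonnegative reals. So the cone of `M` lies in the closure of the union of the
cones of the `M i`, which is the union itself.
-/

noncomputable section

/-- The conic hull of a set `S`: all finite nonnegative real linear combinations
of elements of `S`. -/
def coneHull {V : Type*} [AddCommGroup V] [Module ℝ V] (S : Set V) : Set V :=
  { x | ∃ (n : ℕ) (c : Fin n → ℝ) (v : Fin n → V),
      (∀ i, 0 ≤ c i) ∧ (∀ i, v i ∈ S) ∧ x = ∑ i, c i • v i }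

/-- A cone is the conic hull of a finite set. -/
def IsCone {V : Type*} [AddCommGroup V] [Module ℝ V] (C : Set V) : Prop :=
  ∃ S : Finset V, C = coneHull (S : Set V)

/-- The dimension of a cone: the dimension of its linear span. -/
def coneDim {V : Type*} [AddCommGroup V] [Module ℝ V] (C : Set V) : ℕ :=
  Module.finrank ℝ (Submodule.span ℝ C)

/-- The rank of a cone: the minimum cardinality of a finite generating set. -/
def coneRank {V : Type*} [AddCommGroup V] [Module ℝ V] (C : Set V) : ℕ :=
  sInf { r : ℕ | ∃ S : Finset V, S.card = r ∧ C = coneHull (S : Set V) }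

/-- A full cone: a cone whose dimension equals the ambient dimension. -/
def IsFullCone {V : Type*} [AddCommGroup V] [Module ℝ V] (C : Set V) : Prop :=
  IsCone C ∧ coneDim C = Module.finrank ℝ V

/-- A sector: a cone whose rank equals its dimension. -/
def IsSector {V : Type*} [AddCommGroup V] [Module ℝ V] (C : Set V) : Prop :=
  IsCone C ∧ coneRank C = coneDim C

/-- A sector decomposition of a full cone `C`: a finite family of subcones, each a full
sector, whose union is `C`, with pairwise intersections of empty interior. -/
def IsSectorDecomposition {V : Type*} [AddCommGroup V] [Module ℝ V] [TopologicalSpace V]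
    {p : ℕ} (C : Set V) (F : Fin p → Set V) : Prop :=
  (∀ i, F i ⊆ C) ∧ (∀ i, IsSector (F i) ∧ IsFullCone (F i)) ∧
  (C = ⋃ i, F i) ∧ ∀ i j, i ≠ j → interior (F i ∩ F j) = ∅

/-- The intersection of two cones is a wall (of dimension `d`, one less than the ambient
dimension) if it is a cone of dimension `d`. -/
def IsWallDim {V : Type*} [AddCommGroup V] [Module ℝ V] (C C' : Set V) (d : ℕ) : Prop :=
  IsCone (C ∩ C') ∧ coneDim (C ∩ C') = d

open PointedCone

section OrderedField

variable {𝕜 E : Type*} [Field 𝕜] [LinearOrder 𝕜] [IsStrictOrderedRing 𝕜]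
  [AddCommGroup E] [Module 𝕜 E]

lemma PointedCone.mem_hull_finset_iff {s : Finset E} {x : E} :
    x ∈ hull 𝕜 (s : Set E) ↔ ∃ c : E → 𝕜, (∀ v ∈ s, 0 ≤ c v) ∧ ∑ v ∈ s, c v • v = x := by
  rw [Submodule.mem_span_finset]
  constructor
  · rintro ⟨f, -, rfl⟩
    exact ⟨fun v => f v, fun v _ => (f v).2, rfl⟩
  · rintro ⟨c, hc, rfl⟩
    classical
    refine ⟨fun v => if hv : v ∈ s then ⟨c v, hc v hv⟩ else 0, ?_, ?_⟩
    · exact Function.support_subset_iff'.2 fun v hv => dif_neg hv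
    · refine Finset.sum_congr rfl fun v hv => ?_
      simp [hv, Nonneg.mk_smul]

lemma exists_sum_smul_eq_zero_pos_of_not_linearIndepOn {s : Finset E}
    (hs : ¬LinearIndepOn 𝕜 id (s : Set E)) :
    ∃ g : E → 𝕜, ∑ v ∈ s, g v • v = 0 ∧ ∃ v ∈ s, 0 < g v := by
  obtain ⟨g, hg, v, hv, hgv⟩ := not_linearIndepOn_finset_iff.1 hs
  rcases hgv.lt_or_gt with hneg | hpos
  · exact ⟨-g, by simpa [neg_smul] using hg, v, hv, by simpa using hneg⟩
  · exact ⟨g, hg, v, hv, hpos⟩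

/-- Subtract from the coefficients of `x` the largest multiple of a linear relation `g` that keeps
them nonnegative; the coefficient at a minimiser `w` of `c v / g v` (over `g v > 0`) vanishes. -/
lemma PointedCone.exists_mem_hull_erase_of_not_linearIndepOn [DecidableEq E] {s : Finset E}
    (hs : ¬LinearIndepOn 𝕜 id (s : Set E)) {x : E} (hx : x ∈ hull 𝕜 (s : Set E)) :
    ∃ w ∈ s, x ∈ hull 𝕜 (s.erase w : Set E) := by
  obtain ⟨c, hc, rfl⟩ := mem_hull_finset_iff.1 hx
  obtain ⟨g, hg, v, hv, hgv⟩ := exists_sum_smul_eq_zero_pos_of_not_linearIndepOn hs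
  obtain ⟨w, hw, hmin⟩ := Finset.exists_min_image (s.filter (0 < g ·)) (fun v => c v / g v)
    ⟨v, Finset.mem_filter.2 ⟨hv, hgv⟩⟩
  obtain ⟨hws, hgw⟩ := Finset.mem_filter.1 hw
  set r := c w / g w
  have hr : 0 ≤ r := div_nonneg (hc w hws) hgw.le
  refine ⟨w, hws, mem_hull_finset_iff.2 ⟨fun v => c v - r * g v, fun v hv => ?_, ?_⟩⟩
  · have hvs := Finset.mem_of_mem_erase hv
    rcases le_or_gt (g v) 0 with hg0 | hg0
    · nlinarith [hc v hvs]
    · have := hmin v (Finset.mem_filter.2 ⟨hvs, hg0⟩)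
      rw [le_div_iff₀ hg0] at this
      linarith
  · rw [Finset.sum_erase _ (by simp [r, hgw.ne'])]
    simp only [sub_smul, mul_smul, Finset.sum_sub_distrib, ← Finset.smul_sum, hg, smul_zero,
      sub_zero]

theorem PointedCone.exists_linearIndepOn_subset_of_mem_hull (s : Finset E) {x : E}
    (hx : x ∈ hull 𝕜 (s : Set E)) :
    ∃ t ⊆ s, LinearIndepOn 𝕜 id (t : Set E) ∧ x ∈ hull 𝕜 (t : Set E) := by
  classical
  induction s using Finset.strongInduction with
  | H s ih =>
    by_cases hs : LinearIndepOn 𝕜 id (s : Set E)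
    · exact ⟨s, subset_rfl, hs, hx⟩
    obtain ⟨w, hw, hxw⟩ := exists_mem_hull_erase_of_not_linearIndepOn hs hx
    obtain ⟨t, hts, ht, hxt⟩ := ih _ (Finset.erase_ssubset hw) hxw
    exact ⟨t, hts.trans (Finset.erase_subset _ _), ht, hxt⟩

lemma AddSubmonoid.FG.hull_fg {M : AddSubmonoid E} (hM : M.FG) : (hull 𝕜 (M : Set E)).FG := by
  obtain ⟨s, rfl⟩ := hM
  exact ⟨s, Submodule.span_closure.symm⟩

lemma PointedCone.mem_hull_of_nsmul_mem {S : Set E} {x : E} {n : ℕ} (hn : 0 < n)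
    (hx : n • x ∈ S) : x ∈ hull 𝕜 S := by
  have hn' : (n : 𝕜) ≠ 0 := by positivity
  have hinv : (0 : 𝕜) ≤ (n : 𝕜)⁻¹ := by positivity
  have := (hull 𝕜 S).smul_mem hinv (subset_hull hx)
  rwa [← Nat.cast_smul_eq_nsmul 𝕜, inv_smul_smul₀ hn'] at this

end OrderedField

section Real

variable {V : Type*} [AddCommGroup V] [Module ℝ V]

lemma coneHull_eq_hull (S : Set V) : coneHull S = hull ℝ S := by
  ext x
  rw [SetLike.mem_coe, Submodule.mem_span_set']
  constructor
  · rintro ⟨n, c, v, hc, hv, rfl⟩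
    exact ⟨n, fun i => ⟨c i, hc i⟩, fun i => ⟨v i, hv i⟩, rfl⟩
  · rintro ⟨n, c, v, rfl⟩
    exact ⟨n, fun i => c i, fun i => v i, fun i => (c i).2, fun i => (v i).2, rfl⟩

lemma nnratCast_smul_mem_of_nsmul_mem (M : AddSubmonoid V) (q : ℚ≥0) {x : V} {n : ℕ}
    (hx : n • x ∈ M) : (q.den * n) • ((q : ℝ) • x) ∈ M := by
  have hq : ((q.den : ℝ) * n) * q = q.num * n := by
    have := congrArg (NNRat.cast : ℚ≥0 → ℝ) q.den_mul_eq_num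
    push_cast at this
    linear_combination (n : ℝ) * this
  have : (q.den * n) • ((q : ℝ) • x) = q.num • (n • x) := by
    simp only [← Nat.cast_smul_eq_nsmul ℝ, smul_smul]
    push_cast
    rw [hq]
  rw [this]
  exact M.nsmul_mem hx _

lemma Real.mem_closure_range_nnratCast {c : ℝ} (hc : 0 ≤ c) :
    c ∈ closure (Set.range ((↑) : ℚ≥0 → ℝ)) := by
  refine Metric.mem_closure_iff.2 fun ε hε => ?_
  obtain ⟨q, hcq, hqε⟩ := exists_rat_btwn (lt_add_of_pos_right c hε)
  have hq : 0 ≤ q := by exact_mod_cast hc.trans hcq.le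
  refine ⟨q, ⟨⟨q, hq⟩, rfl⟩, ?_⟩
  rw [Real.dist_eq, abs_sub_lt_iff]
  constructor <;> linarith

variable [TopologicalSpace V]

lemma coe_hull_subset_closure_setOf_nsmul_mem [ContinuousAdd V] [ContinuousSMul ℝ V]
    (M : AddSubmonoid V) :
    (hull ℝ (M : Set V) : Set V) ⊆ closure {x | ∃ n : ℕ, 0 < n ∧ n • x ∈ M} := by
  set D := {x | ∃ n : ℕ, 0 < n ∧ n • x ∈ M}
  have hD_add : ∀ x ∈ D, ∀ y ∈ D, x + y ∈ D := by
    rintro x ⟨n, hn, hx⟩ y ⟨m, hm, hy⟩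
    refine ⟨m * n, Nat.mul_pos hm hn, ?_⟩
    rw [smul_add, mul_smul, mul_comm, mul_smul]
    exact M.add_mem (M.nsmul_mem hx m) (M.nsmul_mem hy n)
  have hD_smul : ∀ q : ℚ≥0, ∀ x ∈ D, (q : ℝ) • x ∈ D := by
    rintro q x ⟨n, hn, hx⟩
    exact ⟨q.den * n, Nat.mul_pos q.den_pos hn, nnratCast_smul_mem_of_nsmul_mem M q hx⟩
  let K : PointedCone ℝ V :=
    { carrier := closure D
      zero_mem' := subset_closure ⟨1, one_pos, by simp⟩
      add_mem' := fun hx hy => by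
        simpa using map_mem_closure₂ continuous_add hx hy hD_add
      smul_mem' := fun c x hx => by
        simpa using map_mem_closure₂ continuous_smul (Real.mem_closure_range_nnratCast c.2) hx
          (by rintro _ ⟨q, rfl⟩ y hy; exact hD_smul q y hy) }
  show hull ℝ (M : Set V) ≤ K
  exact Submodule.span_le.2 fun x hx => subset_closure ⟨1, one_pos, by simpa using hx⟩

variable [IsTopologicalAddGroup V] [ContinuousSMul ℝ V] [T2Space V]

lemma PointedCone.isClosed_hull_of_linearIndepOn {t : Finset V}
    (ht : LinearIndepOn ℝ id (t : Set V)) : IsClosed (hull ℝ (t : Set V) : Set V) := by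
  set f := Fintype.linearCombination ℝ (Subtype.val : ↥(t : Set V) → V)
  have hf : Topology.IsClosedEmbedding f := LinearMap.isClosedEmbedding_of_injective
    (LinearMap.ker_eq_bot.2 ht.fintypeLinearCombination_injective)
  have himage : (hull ℝ (t : Set V) : Set V) = f '' Set.Ici 0 := by
    ext x
    rw [SetLike.mem_coe, Submodule.mem_span_iff_of_fintype]
    constructor
    · rintro ⟨c, rfl⟩
      exact ⟨fun v => c v, fun v => (c v).2, by simp [f, Fintype.linearCombination_apply]⟩
    · rintro ⟨c, hc, rfl⟩
      exact ⟨fun v => ⟨c v, hc v⟩, by simp [f, Fintype.linearCombination_apply]⟩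
  rw [himage]
  exact hf.isClosedMap _ isClosed_Ici

lemma PointedCone.isClosed_hull_finset (s : Finset V) : IsClosed (hull ℝ (s : Set V) : Set V) := by
  classical
  have hunion : (hull ℝ (s : Set V) : Set V) = ⋃ t ∈ s.powerset.filter
      (fun t : Finset V => LinearIndepOn ℝ id (t : Set V)), (hull ℝ (t : Set V) : Set V) := by
    ext x
    simp only [SetLike.mem_coe, Set.mem_iUnion, Finset.mem_filter, Finset.mem_powerset,
      exists_prop]
    constructor
    · intro hx
      obtain ⟨t, hts, ht, hxt⟩ := exists_linearIndepOn_subset_of_mem_hull s hx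
      exact ⟨t, ⟨hts, ht⟩, hxt⟩
    · rintro ⟨t, ⟨hts, -⟩, hxt⟩
      exact Submodule.span_mono (Finset.coe_subset.2 hts) hxt
  rw [hunion]
  exact Set.Finite.isClosed_biUnion (Finset.finite_toSet _)
    fun t ht => isClosed_hull_of_linearIndepOn (Finset.mem_filter.1 ht).2

lemma PointedCone.isClosed_of_fg {C : PointedCone ℝ V} (hC : C.FG) : IsClosed (C : Set V) := by
  obtain ⟨s, rfl⟩ := hC
  exact isClosed_hull_finset s

end Real

theorem stmt_5_general (k p : ℕ) (M : AddSubmonoid (Fin k → ℝ))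
    (Mi : Fin p → AddSubmonoid (Fin k → ℝ))
    (hMi : ∀ i, (Mi i).FG) (hle : ∀ i, Mi i ≤ M)
    (hunion : (M : Set (Fin k → ℝ)) = ⋃ i, (Mi i : Set (Fin k → ℝ))) :
    coneHull (M : Set (Fin k → ℝ)) = ⋃ i, coneHull ((Mi i : Set (Fin k → ℝ))) := by
  simp only [coneHull_eq_hull]
  refine subset_antisymm ?_ (Set.iUnion_subset fun i => Submodule.span_mono (hle i))
  have hclosed : IsClosed (⋃ i, (hull ℝ (Mi i : Set (Fin k → ℝ)) : Set (Fin k → ℝ))) :=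
    isClosed_iUnion_of_finite fun i => isClosed_of_fg (hMi i).hull_fg
  refine (coe_hull_subset_closure_setOf_nsmul_mem M).trans (closure_minimal ?_ hclosed)
  rintro x ⟨n, hn, hx⟩
  obtain ⟨i, hi⟩ := Set.mem_iUnion.1 (hunion ▸ SetLike.mem_coe.2 hx)
  exact Set.mem_iUnion.2 ⟨i, mem_hull_of_nsmul_mem hn hi⟩

/-- If a finitely generated additive submonoid `M ⊆ ℝ^k` is the union of
finitely generated submonoids `M_1,…,M_p ⊆ M`, then the conic hull of `M` equals the union
of the conic hulls of the `M_i`. -/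
theorem stmt_5 (k p : ℕ) (M : AddSubmonoid (Fin k → ℝ))
    (Mi : Fin p → AddSubmonoid (Fin k → ℝ))
    (hM : M.FG) (hMi : ∀ i, (Mi i).FG) (hle : ∀ i, Mi i ≤ M)
    (hunion : (M : Set (Fin k → ℝ)) = ⋃ i, (Mi i : Set (Fin k → ℝ))) :
    coneHull (M : Set (Fin k → ℝ)) = ⋃ i, coneHull ((Mi i : Set (Fin k → ℝ))) :=
  stmt_5_general k p M Mi hMi hle hunion
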